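/- arXiv:2403.08072 — 5 statements merged into one kernel-verified Lean document; each statement's English description precedes it below -/
import Mathlib

section
/- Let Γ be a discrete group and g, h ∈ Γ such that g^n is not conjugate to h^n in Γ for every nonzero integer n. Then there is no unitary u in the group von Neumann algebra L(Γ) with u u_g = u_h u, i.e., the canonical group unitaries u_g and u_h are not conjugate by a unitary in L(Γ). -/
/-!
Writing `u = Σ α k u_k`, the relation `u u_g = u_h u` says that the coefficient family `α` is
invariant under the twisted conjugation `k ↦ h k g⁻¹`. If no power of `g` is conjugate to the
same power of `h`, every orbit `n ↦ hⁿ k g⁻ⁿ` of this action is injective, hence infinite, and a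
square-summable family constant on an infinite set vanishes there.
-/

open scoped ENNReal

theorem Memℓp.eq_zero_of_forall_apply_eq {ι β E : Type*} [NormedAddCommGroup E] [Infinite β]
    {p : ℝ≥0∞} {f : ι → E} (hf : Memℓp f p) (hp : 0 < p.toReal) {e : β → ι}
    (he : Function.Injective e) {c : E} (hfe : ∀ b, f (e b) = c) : c = 0 := by
  have hsum : Summable fun _ : β => ‖c‖ ^ p.toReal := by
    simpa only [Function.comp_def, hfe] using (hf.summable hp).comp_injective he
  have hnorm : ‖c‖ ^ p.toReal = 0 := summable_const_iff _ |>.mp hsum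
  exact norm_eq_zero.mp ((Real.rpow_eq_zero (norm_nonneg c) hp.ne').mp hnorm)

section TwistedConjugation

variable {Γ : Type*} [Group Γ] {g h : Γ}

theorem apply_zpow_mul_mul_zpow_neg {X : Type*} {α : Γ → X}
    (hα : ∀ k, α (h⁻¹ * k) = α (k * g⁻¹)) (k : Γ) (n : ℤ) :
    α (h ^ n * k * g ^ (-n)) = α k := by
  have hstep : ∀ n : ℤ, α (h ^ (n + 1) * k * g ^ (-(n + 1))) = α (h ^ n * k * g ^ (-n)) := by
    intro n
    have hrel := hα (h ^ (n + 1) * k * g ^ (-n))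
    rw [show h⁻¹ * (h ^ (n + 1) * k * g ^ (-n)) = h ^ n * k * g ^ (-n) by group,
      show h ^ (n + 1) * k * g ^ (-n) * g⁻¹ = h ^ (n + 1) * k * g ^ (-(n + 1)) by group] at hrel
    exact hrel.symm
  induction n using Int.induction_on with
  | zero => simp
  | succ n ih => rw [hstep, ih]
  | pred n ih => rw [← ih, ← hstep (-n - 1), sub_add_cancel]

theorem injective_zpow_mul_mul_zpow_neg
    (hconj : ∀ n : ℤ, n ≠ 0 → ∀ k : Γ, k * g ^ n * k⁻¹ ≠ h ^ n) (k : Γ) :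
    Function.Injective fun n : ℤ => h ^ n * k * g ^ (-n) := by
  intro m n (hmn : h ^ m * k * g ^ (-m) = h ^ n * k * g ^ (-n))
  by_contra hmn'
  refine hconj (m - n) (sub_ne_zero.mpr hmn') k (Eq.symm ?_)
  calc h ^ (m - n) = h ^ (-n) * (h ^ m * k * g ^ (-m)) * g ^ m * k⁻¹ := by group
    _ = h ^ (-n) * (h ^ n * k * g ^ (-n)) * g ^ m * k⁻¹ := by rw [hmn]
    _ = k * g ^ (m - n) * k⁻¹ := by group

end TwistedConjugation

theorem stmt0 (Γ : Type*) [Group Γ] (g h : Γ)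
    (hconj : ∀ n : ℤ, n ≠ 0 → ∀ k : Γ, k * g ^ n * k⁻¹ ≠ h ^ n) :
    ¬ ∃ α : Γ → ℂ, Memℓp α 2 ∧ α ≠ 0 ∧ ∀ k : Γ, α (h⁻¹ * k) = α (k * g⁻¹) := by
  rintro ⟨α, hmem, hne, hα⟩
  refine hne (funext fun k => ?_)
  exact hmem.eq_zero_of_forall_apply_eq (by norm_num) (injective_zpow_mul_mul_zpow_neg hconj k)
    (apply_zpow_mul_mul_zpow_neg hα k)
end

section
/- Every countably complete ultrafilter on a set is closed under intersections indexed by any set of cardinality strictly less than the first uncountable measurable cardinal; in particular, if no uncountable measurable cardinal exists below κ, a countably complete ultrafilter is κ-complete for every κ below the first measurable cardinal. -/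
open Cardinal

/-- An ultrafilter `U` on `S` is `κ`-complete if every intersection of a family of members of
`U` indexed by a set of cardinality `< κ` is again a member of `U`. -/
def UltrafilterComplete {S : Type} (U : Ultrafilter S) (κ : Cardinal.{0}) : Prop :=
  ∀ (ι : Type) (A : ι → Set S), #ι < κ → (∀ i, A i ∈ U) → (⋂ i, A i) ∈ U

/-- A cardinal `α` is an (uncountable) measurable cardinal if it is uncountable and there is a
nonprincipal `α`-complete ultrafilter on a set of cardinality `α`. -/
def IsMeasurableCard (α : Cardinal.{0}) : Prop :=
  Cardinal.aleph0 < α ∧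
    ∃ U : Ultrafilter α.out, (∀ x : α.out, U ≠ pure x) ∧ UltrafilterComplete U α

/-!
STATEMENT 4. Every countably complete (= `ℵ₁`-complete) ultrafilter is closed under
intersections indexed by any set whose cardinality is strictly less than the first uncountable
measurable cardinal (i.e. strictly less than every uncountable measurable cardinal). -/
/-- The set of cardinalities of "bad" families for `U`. -/
def BadCards {S : Type} (U : Ultrafilter S) : Set Cardinal.{0} :=
  {κ | ∃ (J : Type) (B : J → Set S), #J = κ ∧ (∀ j, B j ∈ U) ∧ (⋂ j, B j) ∉ U}

theorem stmt4 {S : Type} (U : Ultrafilter S)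
    (hcc : UltrafilterComplete U (Cardinal.aleph 1))
    (ι : Type) (hι : ∀ α : Cardinal.{0}, IsMeasurableCard α → #ι < α)
    (A : ι → Set S) (hA : ∀ i, A i ∈ U) :
    (⋂ i, A i) ∈ U := by
  by_contra hns
  have hPι : #ι ∈ BadCards U := ⟨ι, A, rfl, hA, hns⟩
  set μ := sInf (BadCards U) with hμdef
  have hμmem : μ ∈ BadCards U := csInf_mem ⟨_, hPι⟩
  have hμle : μ ≤ #ι := csInf_le' hPι
  have hmin : ∀ (J : Type) (B : J → Set S), #J < μ → (∀ j, B j ∈ U) → (⋂ j, B j) ∈ U := by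
    intro J B hJ hB
    by_contra h
    exact absurd (csInf_le' (show #J ∈ BadCards U from ⟨J, B, rfl, hB, h⟩)) (not_le.mpr hJ)
  have haleph1 : Cardinal.aleph 1 ≤ μ := by
    apply le_csInf ⟨_, hPι⟩
    intro κ hκ
    by_contra hlt
    obtain ⟨J, B, hJ, hB, hint⟩ := hκ
    exact hint (hcc J B (hJ ▸ not_le.mp hlt) hB)
  obtain ⟨J, B, hJcard, hB, hint⟩ := hμmem
  -- shrink the family so its intersection is empty
  set B' : J → Set S := fun j => B j ∩ (⋂ k, B k)ᶜ with hB'def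
  have hcomp : (⋂ k, B k)ᶜ ∈ U := (Ultrafilter.compl_mem_iff_notMem).mpr hint
  have hB' : ∀ j, B' j ∈ U := fun j => Filter.inter_mem (hB j) hcomp
  have hJne : Nonempty J := by
    by_contra h
    rw [not_nonempty_iff] at h
    exact hint (by rw [Set.iInter_of_empty]; exact Filter.univ_mem)
  have hempty : ∀ s : S, ∃ j, s ∉ B' j := by
    intro s
    by_contra h
    push_neg at h
    obtain ⟨j0⟩ := hJne
    have h1 : s ∈ ⋂ k, B k := Set.mem_iInter.mpr fun k => (h k).1
    exact (h j0).2 h1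
  -- the choice function
  set f : S → J := fun s => (hempty s).choose with hfdef
  have hf : ∀ s, s ∉ B' (f s) := fun s => (hempty s).choose_spec
  -- transfer to `μ.out`
  have hcardeq : #J = #(μ.out) := by rw [hJcard, Cardinal.mk_out]
  obtain ⟨e⟩ := Cardinal.eq.mp hcardeq
  set g : S → μ.out := fun s => e (f s) with hgdef
  set D : Ultrafilter μ.out := U.map g with hDdef
  have hmeas : IsMeasurableCard μ := by
    refine ⟨lt_of_lt_of_le ?_ haleph1, D, ?_, ?_⟩
    · simpa using Cardinal.aleph0_lt_aleph_one
    · intro x hDx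
      have hx : g ⁻¹' {x} ∈ U := by
        have : ({x} : Set μ.out) ∈ D := by rw [hDx]; exact rfl
        exact (Ultrafilter.mem_map).mp this
      have hsub : g ⁻¹' {x} ⊆ (B' (e.symm x))ᶜ := by
        intro s hs
        have hfs : f s = e.symm x := by
          have : e (f s) = x := hs
          rw [← this, Equiv.symm_apply_apply]
        rw [← hfs]
        exact hf s
      exact (Ultrafilter.compl_mem_iff_notMem).mp
        (Filter.mem_of_superset hx hsub) (hB' (e.symm x))
    · intro ι' C hcard hC
      have h1 : ∀ i, g ⁻¹' (C i) ∈ U := fun i => (Ultrafilter.mem_map).mp (hC i)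
      have h2 : (⋂ i, g ⁻¹' (C i)) ∈ U := hmin ι' _ hcard h1
      rw [← Set.preimage_iInter] at h2
      exact (Ultrafilter.mem_map).mpr h2
  exact absurd hμle (not_le.mpr (hι μ hmeas))
end

section
/- The first uncountable measurable cardinal α is inaccessible; in particular, β < α implies 2^β < α, and hence 2^{ℵ₀} < α. -/
open Cardinal

/-!
A nonprincipal `κ`-complete ultrafilter contains no set of size `< κ`, since the complement of
such a set is an intersection of fewer than `κ` co-singletons. Hence its underlying set is not a
union of fewer than `κ` small sets, which gives regularity. If `f` injected it into `Set I` with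
`#I < κ`, then deciding for each `i : I` by the ultrafilter whether `i ∈ f x` would carve out a
set in the ultrafilter with at most one point; this gives the strong limit property.
-/

namespace UltrafilterComplete

variable {S : Type} {U : Ultrafilter S} {κ : Cardinal.{0}}

theorem notMem_of_mk_lt (hc : UltrafilterComplete U κ) (hU : ∀ x, U ≠ pure x) {A : Set S}
    (hA : #A < κ) : A ∉ U := by
  have hsingleton : ∀ a : A, ({(a : S)} : Set S)ᶜ ∈ U := fun a =>
    Ultrafilter.compl_mem_iff_notMem.mpr fun h =>
      hU a (Ultrafilter.eq_of_le (Filter.le_pure_iff.2 h))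
  have hcompl : Aᶜ ∈ U := by
    simpa only [← Set.compl_iUnion, Set.iUnion_of_singleton_coe] using hc A _ hA hsingleton
  exact Ultrafilter.compl_mem_iff_notMem.mp hcompl

theorem iUnion_ne_univ (hc : UltrafilterComplete U κ) (hU : ∀ x, U ≠ pure x) {ι : Type}
    {A : ι → Set S} (hι : #ι < κ) (hA : ∀ i, #(A i) < κ) : ⋃ i, A i ≠ Set.univ := by
  intro hcover
  have hmem : (⋂ i, (A i)ᶜ) ∈ U :=
    hc ι _ hι fun i => Ultrafilter.compl_mem_iff_notMem.mpr (hc.notMem_of_mk_lt hU (hA i))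
  rw [← Set.compl_iUnion, hcover, Set.compl_univ] at hmem
  exact U.empty_notMem hmem

theorem two_power_lt_mk (hc : UltrafilterComplete U κ) (hU : ∀ x, U ≠ pure x) (hκ : 1 < κ)
    {I : Type} (hI : #I < κ) : 2 ^ #I < #S := by
  rw [← mk_set]
  by_contra! hle
  obtain ⟨f⟩ := hle
  let X : Set I := {i | {x | i ∈ f x} ∈ U}
  have hagree : ∀ i, {x | i ∈ f x ↔ i ∈ X} ∈ U := by
    intro i
    by_cases hi : {x | i ∈ f x} ∈ U
    · filter_upwards [hi] with x hx using iff_of_true hx hi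
    · filter_upwards [Ultrafilter.compl_mem_iff_notMem.mpr hi] with x hx
      exact iff_of_false hx hi
  have hsub : (⋂ i, {x | i ∈ f x ↔ i ∈ X}).Subsingleton := fun x hx y hy =>
    f.injective <| Set.ext fun i =>
      (Set.mem_iInter.mp hx i).trans (Set.mem_iInter.mp hy i).symm
  exact hc.notMem_of_mk_lt hU ((mk_le_one_iff_set_subsingleton.mpr hsub).trans_lt hκ)
    (hc I _ hI hagree)

end UltrafilterComplete

theorem Cardinal.le_cof_ord_mk_of_iUnion_ne_univ {S : Type*} (hS : ℵ₀ ≤ #S)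
    (h : ∀ (ι : Type _) (A : ι → Set S), #ι < #S → (∀ i, #(A i) < #S) → ⋃ i, A i ≠ Set.univ) :
    #S ≤ (#S).ord.cof := by
  obtain ⟨e⟩ : Nonempty (S ≃ (#S).ord.ToType) := Cardinal.eq.mp (mk_ord_toType _).symm
  rw [← Ordinal.cof_toType, Order.le_cof_iff]
  intro T hT
  by_contra! hTS
  refine h T (fun t => e ⁻¹' Set.Iic t) hTS (fun t => ?_) ?_
  · rw [mk_preimage_equiv]
    simpa using mk_Iic_lt (t : (#S).ord.ToType) (by simp) (by simpa using hS)
  · refine Set.eq_univ_of_forall fun x => ?_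
    obtain ⟨t, ht, hxt⟩ := hT (e x)
    exact Set.mem_iUnion.mpr ⟨⟨t, ht⟩, hxt⟩

theorem stmt5_general (α : Cardinal.{0}) (hα : IsMeasurableCard α) :
    α.IsInaccessible ∧ (∀ β : Cardinal.{0}, β < α → (2 : Cardinal) ^ β < α) ∧
      (2 : Cardinal) ^ Cardinal.aleph0 < α := by
  obtain ⟨hα₀, U, hU, hc⟩ := hα
  have hpow : ∀ β : Cardinal.{0}, β < α → (2 : Cardinal) ^ β < α := fun β hβ => by
    simpa using
      hc.two_power_lt_mk hU (one_lt_aleph0.trans hα₀) (I := β.out) (by simpa using hβ)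
  have hreg : α ≤ α.ord.cof := by
    simpa using Cardinal.le_cof_ord_mk_of_iUnion_ne_univ (S := α.out) (by simpa using hα₀.le)
      fun ι A hι hA => hc.iUnion_ne_univ hU (by simpa using hι) (by simpa using hA)
  exact ⟨⟨hα₀, hreg, hpow⟩, hpow, hpow _ hα₀⟩

theorem stmt5 (α : Cardinal.{0}) (hα : IsMeasurableCard α)
    (hfirst : ∀ β : Cardinal.{0}, IsMeasurableCard β → α ≤ β) :
    α.IsInaccessible ∧ (∀ β : Cardinal.{0}, β < α → (2 : Cardinal) ^ β < α) ∧
      (2 : Cardinal) ^ Cardinal.aleph0 < α :=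
  stmt5_general α hα
end

section
/- Let A, B be von Neumann subalgebras of a tracial von Neumann algebra (M, τ). Define d(A,B) = max{‖(I−E_B)E_A‖_{∞,2}, ‖(I−E_A)E_B‖_{∞,2}} and d₂(A,B) = ‖E_A − E_B‖_{∞,2}, where ‖φ‖_{∞,2} = sup{‖φ(x)‖₂ : x in the operator-norm unit ball of M}. Then d(A,B) ≤ d₂(A,B) ≤ √(2·d(A,B)). -/
variable {H : Type*} [NormedAddCommGroup H] [InnerProductSpace ℂ H] [CompleteSpace H]

/-- The tracial 2-norm `‖x‖₂ = τ(x* x)^{1/2}` associated to a trace `τ`. -/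
noncomputable def norm2 (τ : (H →L[ℂ] H) →ₗ[ℂ] ℂ) (x : H →L[ℂ] H) : ℝ :=
  Real.sqrt (τ (star x * x)).re

/-- `‖φ‖_{∞,2}`: the supremum of `‖φ x‖₂` over the operator-norm unit ball of `M`. -/
noncomputable def normInfTwo (M : Set (H →L[ℂ] H)) (τ : (H →L[ℂ] H) →ₗ[ℂ] ℂ)
    (φ : (H →L[ℂ] H) → (H →L[ℂ] H)) : ℝ :=
  sSup {r : ℝ | ∃ x : H →L[ℂ] H, x ∈ M ∧ ‖x‖ ≤ 1 ∧ r = norm2 τ (φ x)}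

/-!
STATEMENT 9. Let `A, B` be von Neumann subalgebras of a tracial von Neumann algebra `(M, τ)`,
with trace-preserving conditional expectations `E_A, E_B`.  Define
`d(A,B) = max{‖(I−E_B)E_A‖_{∞,2}, ‖(I−E_A)E_B‖_{∞,2}}` and `d₂(A,B) = ‖E_A − E_B‖_{∞,2}`.
Then `d(A,B) ≤ d₂(A,B) ≤ √(2 d(A,B))`. -/
/-
`E_A - E_B` is self-adjoint for the trace pairing `⟪x, y⟫ = τ (x* y)` and the conditional
expectations are idempotent, so `‖E_A x - E_B x‖₂² = ⟪x, (E_A - E_B)² x⟫` and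
`(E_A - E_B)² = (I - E_B) E_A + (I - E_A) E_B`. Cauchy–Schwarz for the trace pairing and
`‖x‖₂ ≤ ‖x‖ ≤ 1` then give `‖E_A x - E_B x‖₂² ≤ 2 d(A, B)`. The other inequality holds because
`(I - E_B) E_A x = (E_A - E_B) (E_A x)` and `E_A x` stays in the unit ball.
-/

section TracePairing

variable {A : Type*} [Ring A] [StarRing A] [Algebra ℂ A] [StarModule ℂ A]
  {S : Type*} [SetLike S A] [AddSubmonoidClass S A] [SMulMemClass S ℂ A] {s : S}
  {τ : A →ₗ[ℂ] ℂ}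

theorem re_apply_star_mul_comm (hτ : ∀ x ∈ s, (τ (star x * x)).im = 0) {a b : A}
    (ha : a ∈ s) (hb : b ∈ s) : (τ (star b * a)).re = (τ (star a * b)).re := by
  have h := hτ (a + Complex.I • b) (add_mem ha (SMulMemClass.smul_mem _ hb))
  have expand : star (a + Complex.I • b) * (a + Complex.I • b) =
      star a * a + Complex.I • (star a * b) - Complex.I • (star b * a) + star b * b := by
    simp only [star_add, star_smul, Complex.star_def, Complex.conj_I, add_mul, mul_add,
      smul_mul_assoc, mul_smul_comm]
    match_scalars <;> simp
  rw [expand] at h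
  simp only [map_add, map_sub, map_smul, smul_eq_mul, Complex.add_im, Complex.sub_im,
    Complex.mul_im, Complex.I_re, Complex.I_im, hτ a ha, hτ b hb, zero_mul, one_mul, zero_add,
    add_zero] at h
  linarith

theorem re_apply_star_mul_le (hτ : ∀ x ∈ s, 0 ≤ (τ (star x * x)).re ∧ (τ (star x * x)).im = 0)
    {a b : A} (ha : a ∈ s) (hb : b ∈ s) :
    (τ (star a * b)).re ≤ √(τ (star a * a)).re * √(τ (star b * b)).re := by
  have hquad (t : ℝ) : 0 ≤ (τ (star b * b)).re * (t * t) + 2 * (τ (star a * b)).re * t +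
      (τ (star a * a)).re := by
    have h := (hτ (a + (t : ℂ) • b) (add_mem ha (SMulMemClass.smul_mem _ hb))).1
    have expand : star (a + (t : ℂ) • b) * (a + (t : ℂ) • b) = star a * a +
        (t : ℂ) • (star a * b) + (t : ℂ) • (star b * a) + ((t : ℂ) * t) • (star b * b) := by
      simp only [star_add, star_smul, Complex.star_def, Complex.conj_ofReal, add_mul, mul_add,
        smul_mul_assoc, mul_smul_comm]
      module
    rw [expand] at h
    simp only [map_add, map_smul, smul_eq_mul, Complex.add_re, Complex.mul_re, Complex.ofReal_re,
      Complex.ofReal_im, Complex.mul_im, zero_mul, mul_zero, sub_zero, add_zero,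
      re_apply_star_mul_comm (fun x hx => (hτ x hx).2) ha hb] at h
    linarith
  have hdisc := discrim_le_zero hquad
  rw [discrim] at hdisc
  rw [← Real.sqrt_mul (hτ a ha).1]
  exact (le_abs_self _).trans (Real.abs_le_sqrt (by nlinarith))

end TracePairing

theorem re_apply_star_mul_self_le_norm_sq {A : Type*} [CStarAlgebra A] [PartialOrder A]
    [StarOrderedRing A] {s : StarSubalgebra ℂ A} [IsClosed (s : Set A)] {τ : A →ₗ[ℂ] ℂ}
    (h1 : τ 1 = 1) (hτ : ∀ x ∈ s, 0 ≤ (τ (star x * x)).re) {x : A} (hx : x ∈ s) :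
    (τ (star x * x)).re ≤ ‖x‖ ^ 2 := by
  set b := algebraMap ℝ A (‖x‖ ^ 2) - star x * x
  have hb : 0 ≤ b := sub_nonneg.2 CStarAlgebra.star_mul_le_algebraMap_norm_sq
  have hbs : b ∈ s := by
    refine sub_mem ?_ (mul_mem (star_mem hx) hx)
    rw [IsScalarTower.algebraMap_apply ℝ ℂ A]
    exact s.algebraMap_mem _
  have hsqrt : CFC.sqrt b ∈ s := by
    rw [CFC.sqrt_eq_real_sqrt b hb]
    exact cfcₙ_mem Real.sqrt hbs
  have hτb : (τ b).re = ‖x‖ ^ 2 - (τ (star x * x)).re := by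
    simp only [b, Algebra.algebraMap_eq_smul_one, map_sub, LinearMap.map_smul_of_tower, h1,
      Complex.real_smul, mul_one, Complex.sub_re]
    norm_cast
  have := hτ _ hsqrt
  rw [(CFC.sqrt_nonneg b).isSelfAdjoint.star_eq, CFC.sqrt_mul_sqrt_self b hb, hτb] at this
  linarith

instance VonNeumannAlgebra.isClosed_toStarSubalgebra (M : VonNeumannAlgebra H) :
    IsClosed (M.toStarSubalgebra : Set (H →L[ℂ] H)) := by
  change IsClosed (M : Set (H →L[ℂ] H))
  rw [← M.centralizer_centralizer]
  exact Set.isClosed_centralizer _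

/-- Abstracts a trace-preserving conditional expectation of `s` onto a subalgebra of `s`. -/
structure IsTracialProjection {A : Type*} [NormedRing A] [StarRing A] [Module ℂ A]
    (s : Set A) (τ : A →ₗ[ℂ] ℂ) (E : A →ₗ[ℂ] A) : Prop where
  mapsTo : Set.MapsTo E s s
  idem : ∀ x ∈ s, E (E x) = E x
  trace_symm : ∀ x ∈ s, ∀ y ∈ s, τ (star (E x) * y) = τ (star x * E y)
  norm_le : ∀ x ∈ s, ‖E x‖ ≤ ‖x‖

theorem IsTracialProjection.apply_star_sub_mul_sub {A : Type*} [NormedRing A] [StarRing A]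
    [Module ℂ A] {s : Set A} {τ : A →ₗ[ℂ] ℂ} {P Q : A →ₗ[ℂ] A}
    (hP : IsTracialProjection s τ P) (hQ : IsTracialProjection s τ Q) {x : A} (hx : x ∈ s) :
    τ (star (P x - Q x) * (P x - Q x)) =
      τ (star x * (P x - Q (P x))) + τ (star x * (Q x - P (Q x))) := by
  have hPP := hP.trace_symm x hx (P x) (hP.mapsTo hx)
  have hPQ := hP.trace_symm x hx (Q x) (hQ.mapsTo hx)
  have hQP := hQ.trace_symm x hx (P x) (hP.mapsTo hx)
  have hQQ := hQ.trace_symm x hx (Q x) (hQ.mapsTo hx)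
  rw [hP.idem x hx] at hPP
  rw [hQ.idem x hx] at hQQ
  simp only [star_sub, sub_mul, mul_sub, map_sub, hPP, hPQ, hQP, hQQ]
  ring

theorem norm2_neg (τ : (H →L[ℂ] H) →ₗ[ℂ] ℂ) (x : H →L[ℂ] H) : norm2 τ (-x) = norm2 τ x := by
  simp [norm2]

section NormInfTwo

variable {M : Set (H →L[ℂ] H)} {τ : (H →L[ℂ] H) →ₗ[ℂ] ℂ} {φ : (H →L[ℂ] H) → (H →L[ℂ] H)}

theorem normInfTwo_nonneg : 0 ≤ normInfTwo M τ φ :=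
  Real.sSup_nonneg (by rintro _ ⟨x, -, -, rfl⟩; exact Real.sqrt_nonneg _)

-- `hC` makes the set bounded above; otherwise its `sSup` would be the junk value `0`.
theorem norm2_le_normInfTwo {C : ℝ} (hC : ∀ y ∈ M, ‖y‖ ≤ 1 → norm2 τ (φ y) ≤ C)
    {x : H →L[ℂ] H} (hx : x ∈ M) (hx1 : ‖x‖ ≤ 1) : norm2 τ (φ x) ≤ normInfTwo M τ φ :=
  le_csSup ⟨C, by rintro _ ⟨y, hy, hy1, rfl⟩; exact hC y hy hy1⟩ ⟨x, hx, hx1, rfl⟩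

theorem normInfTwo_le {c : ℝ} (h : ∀ x ∈ M, ‖x‖ ≤ 1 → norm2 τ (φ x) ≤ c) (hc : 0 ≤ c) :
    normInfTwo M τ φ ≤ c :=
  Real.sSup_le (by rintro _ ⟨x, hx, hx1, rfl⟩; exact h x hx hx1) hc

theorem normInfTwo_sub_comm (f g : (H →L[ℂ] H) → (H →L[ℂ] H)) :
    normInfTwo M τ (fun x => f x - g x) = normInfTwo M τ (fun x => g x - f x) := by
  simp only [normInfTwo, ← neg_sub (f _), norm2_neg]

end NormInfTwo

section Norm2

variable {s : StarSubalgebra ℂ (H →L[ℂ] H)} [IsClosed (s : Set (H →L[ℂ] H))]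
  {τ : (H →L[ℂ] H) →ₗ[ℂ] ℂ}

theorem norm2_le_norm (h1 : τ 1 = 1)
    (hτ : ∀ x ∈ s, 0 ≤ (τ (star x * x)).re) {x : H →L[ℂ] H} (hx : x ∈ s) : norm2 τ x ≤ ‖x‖ :=
  (Real.sqrt_le_sqrt (re_apply_star_mul_self_le_norm_sq h1 hτ hx)).trans_eq
    (Real.sqrt_sq (norm_nonneg x))

theorem norm2_sub_le_two (h1 : τ 1 = 1)
    (hτ : ∀ x ∈ s, 0 ≤ (τ (star x * x)).re) {x y : H →L[ℂ] H} (hx : x ∈ s) (hy : y ∈ s)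
    (hx1 : ‖x‖ ≤ 1) (hy1 : ‖y‖ ≤ 1) : norm2 τ (x - y) ≤ 2 :=
  (norm2_le_norm h1 hτ (sub_mem hx hy)).trans ((norm_sub_le x y).trans (by linarith))

end Norm2

section Projections

variable {s : StarSubalgebra ℂ (H →L[ℂ] H)} {τ : (H →L[ℂ] H) →ₗ[ℂ] ℂ}
  {P Q : (H →L[ℂ] H) →ₗ[ℂ] (H →L[ℂ] H)}

theorem IsTracialProjection.norm2_sub_comp_le_two [IsClosed (s : Set (H →L[ℂ] H))]
    (h1 : τ 1 = 1) (hτ : ∀ x ∈ s, 0 ≤ (τ (star x * x)).re)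
    (hP : IsTracialProjection s τ P) (hQ : IsTracialProjection s τ Q) {x : H →L[ℂ] H}
    (hx : x ∈ s) (hx1 : ‖x‖ ≤ 1) : norm2 τ (P x - Q (P x)) ≤ 2 :=
  have hPx1 : ‖P x‖ ≤ 1 := (hP.norm_le x hx).trans hx1
  norm2_sub_le_two h1 hτ (hP.mapsTo hx) (hQ.mapsTo (hP.mapsTo hx)) hPx1
    ((hQ.norm_le _ (hP.mapsTo hx)).trans hPx1)

theorem IsTracialProjection.norm2_sub_sq_le
    (hτ : ∀ x ∈ s, 0 ≤ (τ (star x * x)).re ∧ (τ (star x * x)).im = 0)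
    (hP : IsTracialProjection s τ P) (hQ : IsTracialProjection s τ Q) {x : H →L[ℂ] H}
    (hx : x ∈ s) :
    norm2 τ (P x - Q x) ^ 2 ≤
      norm2 τ x * (norm2 τ (P x - Q (P x)) + norm2 τ (Q x - P (Q x))) := by
  have hPx := hP.mapsTo hx
  have hQx := hQ.mapsTo hx
  rw [norm2, Real.sq_sqrt (hτ _ (sub_mem hPx hQx)).1, hP.apply_star_sub_mul_sub hQ hx,
    Complex.add_re, mul_add]
  exact add_le_add (re_apply_star_mul_le hτ hx (sub_mem hPx (hQ.mapsTo hPx)))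
    (re_apply_star_mul_le hτ hx (sub_mem hQx (hP.mapsTo hQx)))

variable [IsClosed (s : Set (H →L[ℂ] H))]

theorem IsTracialProjection.normInfTwo_sub_comp_le (h1 : τ 1 = 1)
    (hτ : ∀ x ∈ s, 0 ≤ (τ (star x * x)).re)
    (hP : IsTracialProjection s τ P) (hQ : IsTracialProjection s τ Q) :
    normInfTwo s τ (fun x => P x - Q (P x)) ≤ normInfTwo s τ (fun x => P x - Q x) := by
  refine normInfTwo_le (fun x hx hx1 => ?_) normInfTwo_nonneg
  have hbound (y) (hy : y ∈ s) (hy1 : ‖y‖ ≤ 1) : norm2 τ (P y - Q y) ≤ 2 :=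
    norm2_sub_le_two h1 hτ (hP.mapsTo hy) (hQ.mapsTo hy) ((hP.norm_le y hy).trans hy1)
      ((hQ.norm_le y hy).trans hy1)
  have := norm2_le_normInfTwo hbound (hP.mapsTo hx) ((hP.norm_le x hx).trans hx1)
  rwa [hP.idem x hx] at this

theorem IsTracialProjection.normInfTwo_sub_le_sqrt (h1 : τ 1 = 1)
    (hτ : ∀ x ∈ s, 0 ≤ (τ (star x * x)).re ∧ (τ (star x * x)).im = 0)
    (hP : IsTracialProjection s τ P) (hQ : IsTracialProjection s τ Q) :
    normInfTwo s τ (fun x => P x - Q x) ≤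
      √(normInfTwo s τ (fun x => P x - Q (P x)) + normInfTwo s τ (fun x => Q x - P (Q x))) := by
  have hτre : ∀ x ∈ s, 0 ≤ (τ (star x * x)).re := fun x hx => (hτ x hx).1
  refine normInfTwo_le (fun x hx hx1 => ?_) (Real.sqrt_nonneg _)
  refine (Real.le_sqrt (Real.sqrt_nonneg _)
    (add_nonneg normInfTwo_nonneg normInfTwo_nonneg)).2 ?_
  have hx2 : norm2 τ x ≤ 1 := (norm2_le_norm h1 hτre hx).trans hx1
  have hPQ := norm2_le_normInfTwo
    (fun y hy hy1 => hP.norm2_sub_comp_le_two h1 hτre hQ hy hy1) hx hx1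
  have hQP := norm2_le_normInfTwo
    (fun y hy hy1 => hQ.norm2_sub_comp_le_two h1 hτre hP hy hy1) hx hx1
  calc norm2 τ (P x - Q x) ^ 2
      ≤ norm2 τ x * (norm2 τ (P x - Q (P x)) + norm2 τ (Q x - P (Q x))) :=
        hP.norm2_sub_sq_le hτ hQ hx
    _ ≤ 1 * (normInfTwo s τ (fun x => P x - Q (P x)) +
          normInfTwo s τ (fun x => Q x - P (Q x))) := by
        gcongr
        exact add_nonneg (Real.sqrt_nonneg _) (Real.sqrt_nonneg _)
    _ = _ := one_mul _

end Projections

theorem stmt9_general (M A B : VonNeumannAlgebra H)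
    (hAM : (A : Set (H →L[ℂ] H)) ⊆ M) (hBM : (B : Set (H →L[ℂ] H)) ⊆ M)
    (τ : (H →L[ℂ] H) →ₗ[ℂ] ℂ)
    -- `τ` is a faithful tracial state on `M`
    (hτ1 : τ 1 = 1)
    (hτpos : ∀ x ∈ M, 0 ≤ (τ (star x * x)).re ∧ (τ (star x * x)).im = 0)
    (EA EB : (H →L[ℂ] H) →ₗ[ℂ] (H →L[ℂ] H))
    -- `E_A` is the trace-preserving conditional expectation of `M` onto `A`
    (hEAran : ∀ x ∈ M, EA x ∈ A) (hEAfix : ∀ a ∈ A, EA a = a)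
    (hEAadj : ∀ x ∈ M, ∀ y ∈ M, τ (star (EA x) * y) = τ (star x * EA y))
    (hEAcontr : ∀ x ∈ M, ‖EA x‖ ≤ ‖x‖)
    -- `E_B` is the trace-preserving conditional expectation of `M` onto `B`
    (hEBran : ∀ x ∈ M, EB x ∈ B) (hEBfix : ∀ b ∈ B, EB b = b)
    (hEBadj : ∀ x ∈ M, ∀ y ∈ M, τ (star (EB x) * y) = τ (star x * EB y))
    (hEBcontr : ∀ x ∈ M, ‖EB x‖ ≤ ‖x‖) :
    max (normInfTwo (M : Set (H →L[ℂ] H)) τ (fun x => EA x - EB (EA x)))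
        (normInfTwo (M : Set (H →L[ℂ] H)) τ (fun x => EB x - EA (EB x))) ≤
      normInfTwo (M : Set (H →L[ℂ] H)) τ (fun x => EA x - EB x) ∧
    normInfTwo (M : Set (H →L[ℂ] H)) τ (fun x => EA x - EB x) ≤
      Real.sqrt (2 * max (normInfTwo (M : Set (H →L[ℂ] H)) τ (fun x => EA x - EB (EA x)))
        (normInfTwo (M : Set (H →L[ℂ] H)) τ (fun x => EB x - EA (EB x)))) := by
  have hA : IsTracialProjection (M.toStarSubalgebra : Set (H →L[ℂ] H)) τ EA :=
    ⟨fun x hx => hAM (hEAran x hx), fun x hx => hEAfix _ (hEAran x hx), hEAadj, hEAcontr⟩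
  have hB : IsTracialProjection (M.toStarSubalgebra : Set (H →L[ℂ] H)) τ EB :=
    ⟨fun x hx => hBM (hEBran x hx), fun x hx => hEBfix _ (hEBran x hx), hEBadj, hEBcontr⟩
  have hτre : ∀ x ∈ M.toStarSubalgebra, 0 ≤ (τ (star x * x)).re := fun x hx => (hτpos x hx).1
  refine ⟨max_le (hA.normInfTwo_sub_comp_le hτ1 hτre hB) ?_, ?_⟩
  · rw [normInfTwo_sub_comm (⇑EA) (⇑EB)]
    exact hB.normInfTwo_sub_comp_le hτ1 hτre hA
  · calc _ ≤ _ := hA.normInfTwo_sub_le_sqrt (s := M.toStarSubalgebra) hτ1 hτpos hB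
      _ ≤ _ := Real.sqrt_le_sqrt <| by
        rw [two_mul]
        exact add_le_add (le_max_left _ _) (le_max_right _ _)

theorem stmt9 (M A B : VonNeumannAlgebra H)
    (hAM : (A : Set (H →L[ℂ] H)) ⊆ M) (hBM : (B : Set (H →L[ℂ] H)) ⊆ M)
    (τ : (H →L[ℂ] H) →ₗ[ℂ] ℂ)
    -- `τ` is a faithful tracial state on `M`
    (hτ1 : τ 1 = 1)
    (hτtr : ∀ x ∈ M, ∀ y ∈ M, τ (x * y) = τ (y * x))
    (hτpos : ∀ x ∈ M, 0 ≤ (τ (star x * x)).re ∧ (τ (star x * x)).im = 0)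
    (hτfaith : ∀ x ∈ M, τ (star x * x) = 0 → x = 0)
    (EA EB : (H →L[ℂ] H) →ₗ[ℂ] (H →L[ℂ] H))
    -- `E_A` is the trace-preserving conditional expectation of `M` onto `A`
    (hEAran : ∀ x ∈ M, EA x ∈ A) (hEAfix : ∀ a ∈ A, EA a = a)
    (hEAbimod : ∀ a ∈ A, ∀ x ∈ M, ∀ a' ∈ A, EA (a * x * a') = a * EA x * a')
    (hEAtr : ∀ x ∈ M, τ (EA x) = τ x)
    (hEAadj : ∀ x ∈ M, ∀ y ∈ M, τ (star (EA x) * y) = τ (star x * EA y))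
    (hEAcontr : ∀ x ∈ M, ‖EA x‖ ≤ ‖x‖)
    -- `E_B` is the trace-preserving conditional expectation of `M` onto `B`
    (hEBran : ∀ x ∈ M, EB x ∈ B) (hEBfix : ∀ b ∈ B, EB b = b)
    (hEBbimod : ∀ b ∈ B, ∀ x ∈ M, ∀ b' ∈ B, EB (b * x * b') = b * EB x * b')
    (hEBtr : ∀ x ∈ M, τ (EB x) = τ x)
    (hEBadj : ∀ x ∈ M, ∀ y ∈ M, τ (star (EB x) * y) = τ (star x * EB y))
    (hEBcontr : ∀ x ∈ M, ‖EB x‖ ≤ ‖x‖) :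
    max (normInfTwo (M : Set (H →L[ℂ] H)) τ (fun x => EA x - EB (EA x)))
        (normInfTwo (M : Set (H →L[ℂ] H)) τ (fun x => EB x - EA (EB x))) ≤
      normInfTwo (M : Set (H →L[ℂ] H)) τ (fun x => EA x - EB x) ∧
    normInfTwo (M : Set (H →L[ℂ] H)) τ (fun x => EA x - EB x) ≤
      Real.sqrt (2 * max (normInfTwo (M : Set (H →L[ℂ] H)) τ (fun x => EA x - EB (EA x)))
        (normInfTwo (M : Set (H →L[ℂ] H)) τ (fun x => EB x - EA (EB x)))) :=
  stmt9_general M A B hAM hBM τ hτ1 hτpos EA EB hEAran hEAfix hEAadj hEAcontr hEBran hEBfix hEBadj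
    hEBcontr
end

section
/- Let M = M₁ *_B M₂ be an amalgamated free product of tracial von Neumann algebras over B, with M₁ diffuse, and suppose there exist unitaries u₁ ∈ M₁ and u₂ ∈ M₂ with E_B(u₁) = E_B(u₂) = 0. Then for all x, y in the dense span of reduced words, E_{M₁}(x (u₁u₂)^n y) = 0 for all sufficiently large n. Consequently, the unitary u₁u₂ is not unitarily conjugate in M to any unitary of M₁, and M contains two Haar unitaries that are not unitarily conjugate. -/
/-!
Freeness says that `E_B` kills reduced words, and `B X_i B ⊆ X_i`, `X_i X_i ⊆ B + X_i` show
that right multiplication by a letter turns a combination of reduced words of length `≥ m` into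
one of length `≥ m - 1`. As `(u₁u₂)ⁿ` is a reduced word of length `2n`, for generators `x`, `y`
the element `x (u₁u₂)ⁿ y` is eventually a combination of reduced words of length `≥ 2`, and these
are orthogonal to `M₁`.

If `v u₁u₂ v* = w ∈ M₁`, approximate `v` in `‖·‖₂` by `y` from the span of reduced words: then
`1 = τ(w⁻ⁿ v (u₁u₂)ⁿ v*)` is close to `τ(w⁻ⁿ E_{M₁}(y (u₁u₂)ⁿ y*)) = 0`. The powers of `u₁u₂` are
reduced words, so `u₁u₂` is a Haar unitary, not conjugate to the Haar unitary of the diffuse `M₁`.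
-/

open Filter

namespace AmalgamatedFreeProduct

lemma conj_pow_of_mem_unitary {R : Type*} [Monoid R] [StarMul R] {v : R} (hv : v ∈ unitary R)
    (U : R) (n : ℕ) : (v * U * star v) ^ n = v * U ^ n * star v :=
  Units.conj_pow (Unitary.toUnits ⟨v, hv⟩) U n

variable {M : Type*} [Ring M] [Algebra ℂ M]

lemma mul_mem_of_mem_span {S : Set M} {P : Submodule ℂ M} {h z : M} (hS : ∀ w ∈ S, w * h ∈ P)
    (hz : z ∈ Submodule.span ℂ S) : z * h ∈ P :=
  (Submodule.span_le (p := P.comap (LinearMap.mulRight ℂ h))).mpr hS hz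

variable [StarRing M]

noncomputable def twoNorm (τ : M →ₗ[ℂ] ℂ) (z : M) : ℝ := √(τ (star z * z)).re

variable {τ : M →ₗ[ℂ] ℂ}

lemma twoNorm_of_mem_unitary (hτ1 : τ 1 = 1) {u : M} (hu : u ∈ unitary M) : twoNorm τ u = 1 := by
  rw [twoNorm, Unitary.star_mul_self_of_mem hu, hτ1, Complex.one_re, Real.sqrt_one]

lemma twoNorm_mul_unitary (hτtr : ∀ x y : M, τ (x * y) = τ (y * x)) {u : M}
    (hu : u ∈ unitary M) (z : M) : twoNorm τ (z * u) = twoNorm τ z := by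
  rw [twoNorm, twoNorm, star_mul, mul_assoc, hτtr, mul_assoc, mul_assoc,
    Unitary.mul_star_self_of_mem hu, mul_one]

lemma twoNorm_unitary_mul {u : M} (hu : u ∈ unitary M) (z : M) :
    twoNorm τ (u * z) = twoNorm τ z := by
  rw [twoNorm, twoNorm, star_mul, mul_assoc, ← mul_assoc (star u),
    Unitary.star_mul_self_of_mem hu, one_mul]

variable [StarModule ℂ M]

lemma star_mem_of_mem_span {S : Set M} {P : Submodule ℂ M} {z : M} (hS : ∀ w ∈ S, star w ∈ P)
    (hz : z ∈ Submodule.span ℂ S) : star z ∈ P :=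
  (Submodule.span_le (p := P.comap (starLinearEquiv ℂ (A := M)).toLinearMap)).mpr hS hz

section Trace

open ComplexConjugate

variable (τ)

lemma trace_star (hτpos : ∀ x : M, 0 ≤ (τ (star x * x)).re ∧ (τ (star x * x)).im = 0)
    (m : M) : τ (star m) = conj (τ m) := by
  -- `τ(z* z)` is real for `z = 1`, `1 + m` and `1 + i m`
  have h₀ := (hτpos 1).2
  have h₁ := (hτpos (1 + m)).2
  have h₂ := (hτpos (1 + Complex.I • m)).2
  simp only [star_add, star_one, star_smul, add_mul, mul_add, one_mul, mul_one, smul_mul_assoc,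
    mul_smul_comm, map_add, map_smul, smul_eq_mul, Complex.add_im, Complex.mul_im, Complex.mul_re,
    Complex.star_def, Complex.conj_I, Complex.I_re, Complex.I_im, Complex.neg_re, Complex.neg_im,
    (hτpos m).2] at h₀ h₁ h₂
  apply Complex.ext <;> simp <;> nlinarith

lemma trace_star_mul_conj_symm
    (hτpos : ∀ x : M, 0 ≤ (τ (star x * x)).re ∧ (τ (star x * x)).im = 0) (x y : M) :
    τ (star y * x) = conj (τ (star x * y)) := by
  rw [← trace_star τ hτpos, star_mul, star_star]

abbrev traceInnerCore (hτpos : ∀ x : M, 0 ≤ (τ (star x * x)).re ∧ (τ (star x * x)).im = 0) :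
    PreInnerProductSpace.Core ℂ M where
  inner x y := τ (star x * y)
  conj_inner_symm x y := by simp only [trace_star_mul_conj_symm τ hτpos y x]
  re_inner_nonneg x := (hτpos x).1
  add_left x y z := by simp only [star_add, add_mul, map_add]
  smul_left x y r := by simp only [star_smul, smul_mul_assoc, map_smul, smul_eq_mul]; rfl

variable {τ}

lemma norm_trace_star_mul_le
    (hτpos : ∀ x : M, 0 ≤ (τ (star x * x)).re ∧ (τ (star x * x)).im = 0) (x y : M) :
    ‖τ (star x * y)‖ ≤ twoNorm τ x * twoNorm τ y := by
  let := traceInnerCore τ hτpos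
  exact InnerProductSpace.Core.norm_inner_le_norm (𝕜 := ℂ) x y

lemma twoNorm_le_add_twoNorm_sub
    (hτpos : ∀ x : M, 0 ≤ (τ (star x * x)).re ∧ (τ (star x * x)).im = 0) (x y : M) :
    twoNorm τ y ≤ twoNorm τ x + twoNorm τ (x - y) := by
  let := traceInnerCore τ hτpos
  let := InnerProductSpace.Core.toSeminormedAddCommGroup (𝕜 := ℂ) (F := M)
  exact norm_le_norm_add_norm_sub x y

end Trace

section Estimate

variable (hτ1 : τ 1 = 1) (hτtr : ∀ x y : M, τ (x * y) = τ (y * x))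
  (hτpos : ∀ x : M, 0 ≤ (τ (star x * x)).re ∧ (τ (star x * x)).im = 0)
include hτ1 hτtr hτpos

/-- With `W = v U v*` and `y ≈ v`, the pairing `τ(W* W) = 1` is almost `τ(W* y U y*)`. -/
lemma one_le_norm_trace_add {v U : M} (hv : v ∈ unitary M) (hU : U ∈ unitary M) (y : M) :
    1 ≤ ‖τ (star (v * U * star v) * (y * U * star y))‖
      + twoNorm τ (v - y) * (twoNorm τ y + 1) := by
  set W := v * U * star v
  have hW : W ∈ unitary M := mul_mem (mul_mem hv hU) (Unitary.star_mem hv)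
  have hsplit : star W * W = star W * (y * U * star y) + star W * (y * U * star (v - y))
      + star W * ((v - y) * (U * star v)) := by
    simp only [W, star_sub]
    noncomm_ring
  have h₁ : ‖τ (star W * (y * U * star (v - y)))‖ ≤ twoNorm τ (v - y) * twoNorm τ y := by
    have := norm_trace_star_mul_le hτpos (v - y) (star W * (y * U))
    rw [twoNorm_unitary_mul (Unitary.star_mem hW), twoNorm_mul_unitary hτtr hU, ← hτtr] at this
    simpa only [mul_assoc] using this
  have h₂ : ‖τ (star W * ((v - y) * (U * star v)))‖ ≤ twoNorm τ (v - y) := by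
    have := norm_trace_star_mul_le hτpos W ((v - y) * (U * star v))
    rwa [twoNorm_of_mem_unitary hτ1 hW, one_mul,
      twoNorm_mul_unitary hτtr (mul_mem hU (Unitary.star_mem hv))] at this
  calc (1 : ℝ) = ‖τ (star W * W)‖ := by rw [Unitary.star_mul_self_of_mem hW, hτ1, norm_one]
    _ ≤ _ := by
      rw [hsplit, map_add, map_add]
      refine (norm_add₃_le).trans ?_
      linarith

/-- Popa's intertwining argument: `E_A(y Uⁿ y*) → 0` on a dense set keeps `U` away from `A`. -/
lemma conj_not_mem_of_eventually_eq_zero {A : StarSubalgebra ℂ M} {E : M →ₗ[ℂ] M}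
    (hEbimod : ∀ a ∈ A, ∀ x : M, ∀ a' ∈ A, E (a * x * a') = a * E x * a')
    (hEtr : ∀ x : M, τ (E x) = τ x) {S : Set M}
    (hdense : ∀ z : M, ∀ ε : ℝ, 0 < ε → ∃ y ∈ S, twoNorm τ (z - y) < ε)
    {U : M} (hU : U ∈ unitary M) (hvanish : ∀ y ∈ S, ∀ᶠ n in atTop, E (y * U ^ n * star y) = 0)
    {v : M} (hv : v ∈ unitary M) : v * U * star v ∉ A := by
  intro hA
  obtain ⟨y, hyS, hvy⟩ := hdense v (1 / 4) (by norm_num)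
  obtain ⟨n, hn⟩ := (hvanish y hyS).exists
  have hzero : τ (star (v * U ^ n * star v) * (y * U ^ n * star y)) = 0 := by
    have hmem : star (v * U ^ n * star v) ∈ A := by
      rw [← conj_pow_of_mem_unitary hv]
      exact star_mem (pow_mem hA n)
    have hE := hEbimod _ hmem (y * U ^ n * star y) 1 (one_mem A)
    rw [mul_one, mul_one] at hE
    rw [← hEtr, hE, hn, mul_zero, map_zero]
  have key := one_le_norm_trace_add hτ1 hτtr hτpos hv (pow_mem hU n) y
  have hy := twoNorm_le_add_twoNorm_sub hτpos v y
  rw [hzero, norm_zero, zero_add] at key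
  rw [twoNorm_of_mem_unitary hτ1 hv] at hy
  have hvy₀ : 0 ≤ twoNorm τ (v - y) := Real.sqrt_nonneg _
  nlinarith

end Estimate

/-- Alternating products of `ℓ` letters from `X_k = Msub k ∩ ker EB`, from `X_i` to `X_j`. -/
inductive IsReducedWord (Msub : Fin 2 → StarSubalgebra ℂ M) (EB : M →ₗ[ℂ] M) :
    Fin 2 → Fin 2 → ℕ → M → Prop
  | single {i : Fin 2} {x : M} (hx : x ∈ Msub i) (hx0 : EB x = 0) : IsReducedWord Msub EB i i 1 x
  | snoc {i j j' : Fin 2} {ℓ : ℕ} {w x : M} (hw : IsReducedWord Msub EB i j ℓ w)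
      (hx : x ∈ Msub j') (hx0 : EB x = 0) (hj : j ≠ j') : IsReducedWord Msub EB i j' (ℓ + 1) (w * x)

def reducedWords (Msub : Fin 2 → StarSubalgebra ℂ M) (EB : M →ₗ[ℂ] M) : Set M :=
  {w : M | ∃ (k : ℕ) (x : Fin (k + 1) → M) (idx : Fin (k + 1) → Fin 2),
    (∀ j, x j ∈ Msub (idx j)) ∧ (∀ j, EB (x j) = 0) ∧
    (∀ j : Fin k, idx j.castSucc ≠ idx j.succ) ∧ w = (List.ofFn x).prod}

def wordSpan (Msub : Fin 2 → StarSubalgebra ℂ M) (EB : M →ₗ[ℂ] M) (m : ℕ) : Submodule ℂ M :=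
  Submodule.span ℂ {w | ∃ i j ℓ, m ≤ ℓ ∧ IsReducedWord Msub EB i j ℓ w}

variable {B : StarSubalgebra ℂ M} {Msub : Fin 2 → StarSubalgebra ℂ M} {EB : M →ₗ[ℂ] M}

lemma IsReducedWord.cons {i i' j : Fin 2} {ℓ : ℕ} {w x : M} (hx : x ∈ Msub i)
    (hx0 : EB x = 0) (hi : i ≠ i') (hw : IsReducedWord Msub EB i' j ℓ w) :
    IsReducedWord Msub EB i j (ℓ + 1) (x * w) := by
  induction hw with
  | single hy hy0 => exact .snoc (.single hx hx0) hy hy0 hi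
  | snoc _ hy hy0 hj ih => rw [← mul_assoc]; exact .snoc ih hy hy0 hj

lemma IsReducedWord.exists_ofFn_prod {i j : Fin 2} {ℓ : ℕ} {w : M}
    (h : IsReducedWord Msub EB i j ℓ w) :
    ∃ (k : ℕ) (x : Fin (k + 1) → M) (idx : Fin (k + 1) → Fin 2),
      (∀ t, x t ∈ Msub (idx t)) ∧ (∀ t, EB (x t) = 0) ∧
      (∀ t : Fin k, idx t.castSucc ≠ idx t.succ) ∧ w = (List.ofFn x).prod ∧
      idx (Fin.last k) = j := by
  induction h with
  | @single x hx hx0 => exact ⟨0, fun _ => x, fun _ => i, fun _ => hx, fun _ => hx0,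
      fun t => t.elim0, by simp, rfl⟩
  | @snoc j j' ℓ w y _ hy hy0 hj ih =>
    obtain ⟨k, x, idx, hmem, hker, halt, rfl, hlast⟩ := ih
    refine ⟨k + 1, Fin.snoc x y, Fin.snoc idx j', fun t => ?_, fun t => ?_, fun t => ?_,
      ?_, by simp⟩
    · refine Fin.lastCases ?_ (fun s => ?_) t <;> simp [hy, hmem]
    · refine Fin.lastCases ?_ (fun s => ?_) t <;> simp [hy0, hker]
    · refine Fin.lastCases ?_ (fun s => ?_) t
      · simpa [Fin.succ_last, hlast] using hj
      · rw [Fin.succ_castSucc, Fin.snoc_castSucc, Fin.snoc_castSucc]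
        exact halt s
    · rw [List.ofFn_succ' (Fin.snoc x y), List.prod_concat]
      simp only [Fin.snoc_castSucc, Fin.snoc_last]

lemma IsReducedWord.mem_reducedWords {i j : Fin 2} {ℓ : ℕ} {w : M}
    (h : IsReducedWord Msub EB i j ℓ w) :
    w ∈ reducedWords Msub EB := by
  obtain ⟨k, x, idx, hmem, hker, halt, rfl, -⟩ := h.exists_ofFn_prod
  exact ⟨k, x, idx, hmem, hker, halt, rfl⟩

protected lemma IsReducedWord.star {i j : Fin 2} {ℓ : ℕ} {w : M}
    (hEBstar : ∀ x : M, EB (star x) = star (EB x)) (h : IsReducedWord Msub EB i j ℓ w) :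
    IsReducedWord Msub EB j i ℓ (star w) := by
  induction h with
  | single hx hx0 => exact .single (star_mem hx) (by rw [hEBstar, hx0, star_zero])
  | snoc _ hx hx0 hj ih =>
    rw [star_mul]
    exact .cons (star_mem hx) (by rw [hEBstar, hx0, star_zero]) hj.symm ih

lemma exists_isReducedWord_ofFn_prod :
    ∀ (k : ℕ) (x : Fin (k + 1) → M) (idx : Fin (k + 1) → Fin 2), (∀ t, x t ∈ Msub (idx t)) →
    (∀ t, EB (x t) = 0) → (∀ t : Fin k, idx t.castSucc ≠ idx t.succ) →
    ∃ j, IsReducedWord Msub EB (idx 0) j (k + 1) (List.ofFn x).prod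
  | 0, x, idx, hmem, hker, _ => ⟨idx 0, by simpa using .single (hmem 0) (hker 0)⟩
  | k + 1, x, idx, hmem, hker, halt => by
    obtain ⟨j, hw⟩ := exists_isReducedWord_ofFn_prod k (fun t => x t.succ) (fun t => idx t.succ)
      (fun t => hmem t.succ) (fun t => hker t.succ)
      (fun t => by simpa [← Fin.succ_castSucc] using halt t.succ)
    refine ⟨j, ?_⟩
    rw [List.ofFn_succ, List.prod_cons]
    exact .cons (hmem 0) (hker 0) (by simpa using halt 0) hw

lemma exists_isReducedWord_of_mem_reducedWords {w : M} (hw : w ∈ reducedWords Msub EB) :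
    ∃ i j ℓ, IsReducedWord Msub EB i j ℓ w := by
  obtain ⟨k, x, idx, hmem, hker, halt, rfl⟩ := hw
  obtain ⟨j, h⟩ := exists_isReducedWord_ofFn_prod k x idx hmem hker halt
  exact ⟨_, j, _, h⟩

lemma wordSpan_antitone : Antitone (wordSpan Msub EB) :=
  fun _ _ h => Submodule.span_mono fun _ ⟨i, j, ℓ, hℓ, hw⟩ => ⟨i, j, ℓ, h.trans hℓ, hw⟩

lemma IsReducedWord.mem_wordSpan {i j : Fin 2} {ℓ m : ℕ} {w : M}
    (h : IsReducedWord Msub EB i j ℓ w) (hm : m ≤ ℓ) : w ∈ wordSpan Msub EB m :=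
  Submodule.subset_span ⟨i, j, ℓ, hm, h⟩

lemma star_mem_wordSpan (hEBstar : ∀ x : M, EB (star x) = star (EB x)) {m : ℕ} {z : M}
    (hz : z ∈ wordSpan Msub EB m) : star z ∈ wordSpan Msub EB m :=
  star_mem_of_mem_span (by rintro _ ⟨_, _, _, hℓ, hw⟩; exact (hw.star hEBstar).mem_wordSpan hℓ)
    hz

section Bimodule

variable (hBM : ∀ i, B ≤ Msub i)
  (hEBbimod : ∀ b ∈ B, ∀ x : M, ∀ b' ∈ B, EB (b * x * b') = b * EB x * b')
include hBM hEBbimod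

lemma IsReducedWord.mul_of_mem {i j : Fin 2} {ℓ : ℕ} {w b : M}
    (h : IsReducedWord Msub EB i j ℓ w) (hb : b ∈ B) : IsReducedWord Msub EB i j ℓ (w * b) := by
  have hEB : ∀ x, EB x = 0 → EB (x * b) = 0 := fun x hx => by
    simpa [hx] using hEBbimod 1 (one_mem B) x b hb
  cases h with
  | single hx hx0 => exact .single (mul_mem hx (hBM _ hb)) (hEB _ hx0)
  | snoc hw hx hx0 hj => rw [mul_assoc]; exact .snoc hw (mul_mem hx (hBM _ hb)) (hEB _ hx0) hj

variable (hEBran : ∀ x : M, EB x ∈ B) (hEBfix : ∀ b ∈ B, EB b = b)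
include hEBran hEBfix

/-- Splitting `a = E_B(a) + (a - E_B(a))`. -/
lemma IsReducedWord.mul_mem_wordSpan {i j j' : Fin 2} {ℓ : ℕ} {w a : M}
    (h : IsReducedWord Msub EB i j ℓ w) (ha : a ∈ Msub j') (hj : j ≠ j') :
    w * a ∈ wordSpan Msub EB ℓ := by
  have hsplit : w * a = w * EB a + w * (a - EB a) := by rw [← mul_add, add_sub_cancel]
  rw [hsplit]
  refine add_mem ((h.mul_of_mem hBM hEBbimod (hEBran a)).mem_wordSpan le_rfl)
    ((h.snoc (sub_mem ha (hBM _ (hEBran a))) ?_ hj).mem_wordSpan (Nat.le_succ ℓ))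
  rw [map_sub, hEBfix _ (hEBran a), sub_self]

lemma IsReducedWord.mul_letter_mem_wordSpan {i j j' : Fin 2} {ℓ : ℕ} {w s : M}
    (h : IsReducedWord Msub EB i j ℓ w) (hℓ : 2 ≤ ℓ) (hs : s ∈ Msub j') (hs0 : EB s = 0) :
    w * s ∈ wordSpan Msub EB (ℓ - 1) := by
  by_cases hj : j = j'
  · subst hj
    cases h with
    | single => omega
    | snoc hw ht _ hj' =>
      rw [mul_assoc, Nat.add_sub_cancel]
      exact hw.mul_mem_wordSpan hBM hEBbimod hEBran hEBfix (mul_mem ht hs) hj'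
  · exact wordSpan_antitone (by omega) ((h.snoc hs hs0 hj).mem_wordSpan le_rfl)

lemma mul_letter_mem_wordSpan {j : Fin 2} {m : ℕ} {z s : M} (hz : z ∈ wordSpan Msub EB m)
    (hm : 2 ≤ m) (hs : s ∈ Msub j) (hs0 : EB s = 0) : z * s ∈ wordSpan Msub EB (m - 1) :=
  mul_mem_of_mem_span (by
    rintro _ ⟨_, _, _, hℓ, hw⟩
    exact wordSpan_antitone (by omega)
      (hw.mul_letter_mem_wordSpan hBM hEBbimod hEBran hEBfix (hm.trans hℓ) hs hs0)) hz

lemma mul_word_mem_wordSpan {p q : Fin 2} {c m : ℕ} {z h : M} (hz : z ∈ wordSpan Msub EB m)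
    (hh : IsReducedWord Msub EB p q c h) (hc : c < m) : z * h ∈ wordSpan Msub EB (m - c) := by
  induction hh with
  | single hs hs0 => exact mul_letter_mem_wordSpan hBM hEBbimod hEBran hEBfix hz hc hs hs0
  | @snoc j j' c h' s hh' hs hs0 _ ih =>
    rw [← mul_assoc, ← Nat.sub_sub]
    exact mul_letter_mem_wordSpan hBM hEBbimod hEBran hEBfix (ih (by omega)) (by omega) hs hs0

lemma exists_mul_mem_wordSpan {g : M} (hg : g ∈ (B : Set M) ∪ reducedWords Msub EB) :
    ∃ c, ∀ m z, z ∈ wordSpan Msub EB m → c < m → z * g ∈ wordSpan Msub EB (m - c) := by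
  rcases hg with hg | hg
  · refine ⟨0, fun m z hz _ => mul_mem_of_mem_span ?_ hz⟩
    rintro _ ⟨_, _, _, hℓ, hw⟩
    exact (hw.mul_of_mem hBM hEBbimod hg).mem_wordSpan hℓ
  · obtain ⟨p, q, c, hw⟩ := exists_isReducedWord_of_mem_reducedWords hg
    exact ⟨c, fun m z hz hc => mul_word_mem_wordSpan hBM hEBbimod hEBran hEBfix hz hw hc⟩

end Bimodule

lemma star_mem_union_reducedWords (hEBstar : ∀ x : M, EB (star x) = star (EB x)) {g : M}
    (hg : g ∈ (B : Set M) ∪ reducedWords Msub EB) :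
    star g ∈ (B : Set M) ∪ reducedWords Msub EB := by
  rcases hg with hg | hg
  · exact Or.inl (star_mem hg)
  · obtain ⟨i, j, ℓ, hw⟩ := exists_isReducedWord_of_mem_reducedWords hg
    exact Or.inr (hw.star hEBstar).mem_reducedWords

lemma star_mem_span_union_reducedWords (hEBstar : ∀ x : M, EB (star x) = star (EB x)) {z : M}
    (hz : z ∈ Submodule.span ℂ ((B : Set M) ∪ reducedWords Msub EB)) :
    star z ∈ Submodule.span ℂ ((B : Set M) ∪ reducedWords Msub EB) :=
  star_mem_of_mem_span
    (fun _ hg => Submodule.subset_span (star_mem_union_reducedWords hEBstar hg)) hz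

lemma isReducedWord_pow {i j : Fin 2} (hij : i ≠ j) {u₁ u₂ : M} (hu₁ : u₁ ∈ Msub i)
    (hu₁0 : EB u₁ = 0) (hu₂ : u₂ ∈ Msub j) (hu₂0 : EB u₂ = 0) :
    ∀ k : ℕ, IsReducedWord Msub EB i j (2 * k + 2) ((u₁ * u₂) ^ (k + 1))
  | 0 => by simpa using (IsReducedWord.single hu₁ hu₁0).snoc hu₂ hu₂0 hij
  | k + 1 => by
    rw [pow_succ, ← mul_assoc, show 2 * (k + 1) + 2 = 2 * k + 2 + 1 + 1 by ring]
    exact ((isReducedWord_pow hij hu₁ hu₁0 hu₂ hu₂0 k).snoc hu₁ hu₁0 hij.symm).snoc hu₂ hu₂0 hij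

lemma eventually_mul_pow_mul_mem_wordSpan (hBM : ∀ i, B ≤ Msub i)
    (hEBbimod : ∀ b ∈ B, ∀ x : M, ∀ b' ∈ B, EB (b * x * b') = b * EB x * b')
    (hEBran : ∀ x : M, EB x ∈ B) (hEBfix : ∀ b ∈ B, EB b = b)
    (hEBstar : ∀ x : M, EB (star x) = star (EB x)) {i j : Fin 2} (hij : i ≠ j) {u₁ u₂ : M}
    (hu₁ : u₁ ∈ Msub i) (hu₁0 : EB u₁ = 0) (hu₂ : u₂ ∈ Msub j) (hu₂0 : EB u₂ = 0) {g h : M}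
    (hg : g ∈ (B : Set M) ∪ reducedWords Msub EB) (hh : h ∈ (B : Set M) ∪ reducedWords Msub EB) :
    ∀ᶠ n in atTop, g * (u₁ * u₂) ^ n * h ∈ wordSpan Msub EB 2 := by
  obtain ⟨a, ha⟩ := exists_mul_mem_wordSpan hBM hEBbimod hEBran hEBfix
    (star_mem_union_reducedWords hEBstar hg)
  obtain ⟨c, hc⟩ := exists_mul_mem_wordSpan hBM hEBbimod hEBran hEBfix hh
  filter_upwards [eventually_ge_atTop (a + c + 2)] with n hn
  obtain ⟨k, rfl⟩ : ∃ k, n = k + 1 := ⟨n - 1, by omega⟩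
  have hpow := star_mem_wordSpan hEBstar
    ((isReducedWord_pow hij hu₁ hu₁0 hu₂ hu₂0 k).mem_wordSpan le_rfl)
  have hgU : g * (u₁ * u₂) ^ (k + 1) ∈ wordSpan Msub EB (2 * k + 2 - a) := by
    simpa using star_mem_wordSpan hEBstar (ha _ _ hpow (by omega))
  exact wordSpan_antitone (by omega) (hc _ _ hgU (by omega))

section Expectations

variable (τ)

lemma EB_star (hτpos : ∀ x : M, 0 ≤ (τ (star x * x)).re ∧ (τ (star x * x)).im = 0)
    (hτfaith : ∀ x : M, τ (star x * x) = 0 → x = 0) (hEBran : ∀ x : M, EB x ∈ B)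
    (hEBbimod : ∀ b ∈ B, ∀ x : M, ∀ b' ∈ B, EB (b * x * b') = b * EB x * b')
    (hEBtr : ∀ x : M, τ (EB x) = τ x) (z : M) : EB (star z) = star (EB z) := by
  have hpair : ∀ b ∈ B, τ (star b * star z) = τ (star b * star (EB z)) := by
    intro b hb
    have hzb := hEBbimod 1 (one_mem B) z b hb
    rw [one_mul, one_mul] at hzb
    rw [← star_mul, ← star_mul, trace_star τ hτpos, trace_star τ hτpos, ← hEBtr (z * b), hzb]
  set d := EB (star z) - star (EB z)
  have hdB : d ∈ B := sub_mem (hEBran _) (star_mem (hEBran z))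
  have hproj : τ (star d * EB (star z)) = τ (star d * star z) := by
    have h := hEBbimod (star d) (star_mem hdB) (star z) 1 (one_mem B)
    rw [mul_one, mul_one] at h
    rw [← h, hEBtr]
  refine sub_eq_zero.mp (hτfaith d ?_)
  rw [mul_sub, map_sub, hproj, hpair d hdB, sub_self]

section Freeness

variable (hfree : ∀ (k : ℕ) (x : Fin (k + 1) → M) (idx : Fin (k + 1) → Fin 2),
      (∀ j, x j ∈ Msub (idx j)) → (∀ j, EB (x j) = 0) →
      (∀ j : Fin k, idx j.castSucc ≠ idx j.succ) → EB (List.ofFn x).prod = 0)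
include hfree

lemma IsReducedWord.EB_eq_zero {i j : Fin 2} {ℓ : ℕ} {w : M}
    (h : IsReducedWord Msub EB i j ℓ w) : EB w = 0 := by
  obtain ⟨k, x, idx, hmem, hker, halt, rfl, -⟩ := h.exists_ofFn_prod
  exact hfree k x idx hmem hker halt

lemma EB_eq_zero_of_mem_wordSpan {m : ℕ} {z : M} (hz : z ∈ wordSpan Msub EB m) : EB z = 0 := by
  refine (Submodule.span_le (p := LinearMap.ker EB)).mpr ?_ hz
  rintro _ ⟨_, _, _, _, hw⟩
  exact hw.EB_eq_zero hfree

/-- In `τ(w a)` with `a ∈ M_k`, the letter `a` merges with at most one letter of `w`. -/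
lemma IsReducedWord.condExp_eq_zero (hτtr : ∀ x y : M, τ (x * y) = τ (y * x))
    (hτfaith : ∀ x : M, τ (star x * x) = 0 → x = 0) (hBM : ∀ i, B ≤ Msub i)
    (hEBbimod : ∀ b ∈ B, ∀ x : M, ∀ b' ∈ B, EB (b * x * b') = b * EB x * b')
    (hEBran : ∀ x : M, EB x ∈ B) (hEBfix : ∀ b ∈ B, EB b = b) (hEBtr : ∀ x : M, τ (EB x) = τ x)
    {k : Fin 2} {E : M →ₗ[ℂ] M} (hEran : ∀ x : M, E x ∈ Msub k)
    (hEbimod : ∀ a ∈ Msub k, ∀ x : M, ∀ a' ∈ Msub k, E (a * x * a') = a * E x * a')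
    (hEtr : ∀ x : M, τ (E x) = τ x) {i j : Fin 2} {ℓ : ℕ} {w : M}
    (h : IsReducedWord Msub EB i j ℓ w) (hℓ : 2 ≤ ℓ) : E w = 0 := by
  have he : star (E w) ∈ Msub k := star_mem (hEran w)
  have hspan : ∃ m, w * star (E w) ∈ wordSpan Msub EB m := by
    by_cases hj : j = k
    · subst hj
      cases h with
      | single => omega
      | snoc hw ht _ hj' =>
        rw [mul_assoc]
        exact ⟨_, hw.mul_mem_wordSpan hBM hEBbimod hEBran hEBfix (mul_mem ht he) hj'⟩
    · exact ⟨_, h.mul_mem_wordSpan hBM hEBbimod hEBran hEBfix he hj⟩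
  obtain ⟨m, hm⟩ := hspan
  have hproj := hEbimod _ he w 1 (one_mem _)
  rw [mul_one, mul_one] at hproj
  refine hτfaith _ ?_
  rw [← hproj, hEtr, hτtr, ← hEBtr, EB_eq_zero_of_mem_wordSpan hfree hm, map_zero]

def IsHaarUnitary (τ : M →ₗ[ℂ] ℂ) (w : M) : Prop :=
  star w * w = 1 ∧ w * star w = 1 ∧ ∀ n : ℕ, n ≠ 0 → τ (w ^ n) = 0 ∧ τ (star w ^ n) = 0

lemma isHaarUnitary_mul (hτpos : ∀ x : M, 0 ≤ (τ (star x * x)).re ∧ (τ (star x * x)).im = 0)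
    (hEBtr : ∀ x : M, τ (EB x) = τ x) {i j : Fin 2} (hij : i ≠ j) {u₁ u₂ : M}
    (hu₁ : u₁ ∈ Msub i) (hu₁0 : EB u₁ = 0) (hu₂ : u₂ ∈ Msub j) (hu₂0 : EB u₂ = 0)
    (hu₁U : u₁ ∈ unitary M) (hu₂U : u₂ ∈ unitary M) : IsHaarUnitary τ (u₁ * u₂) := by
  obtain ⟨h₁, h₂⟩ := mul_mem hu₁U hu₂U
  refine ⟨h₁, h₂, fun n hn => ?_⟩
  obtain ⟨k, rfl⟩ := Nat.exists_eq_succ_of_ne_zero hn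
  have hτ : τ ((u₁ * u₂) ^ (k + 1)) = 0 := by
    rw [← hEBtr, (isReducedWord_pow hij hu₁ hu₁0 hu₂ hu₂0 k).EB_eq_zero hfree, map_zero]
  exact ⟨hτ, by rw [← star_pow, trace_star τ hτpos, hτ, map_zero]⟩

variable (hτtr : ∀ x y : M, τ (x * y) = τ (y * x))
  (hτfaith : ∀ x : M, τ (star x * x) = 0 → x = 0) (hBM : ∀ i, B ≤ Msub i)
  (hEBbimod : ∀ b ∈ B, ∀ x : M, ∀ b' ∈ B, EB (b * x * b') = b * EB x * b')
  (hEBran : ∀ x : M, EB x ∈ B) (hEBfix : ∀ b ∈ B, EB b = b) (hEBtr : ∀ x : M, τ (EB x) = τ x)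
  {k : Fin 2} {E : M →ₗ[ℂ] M} (hEran : ∀ x : M, E x ∈ Msub k)
  (hEbimod : ∀ a ∈ Msub k, ∀ x : M, ∀ a' ∈ Msub k, E (a * x * a') = a * E x * a')
  (hEtr : ∀ x : M, τ (E x) = τ x)
include hτtr hτfaith hBM hEBbimod hEBran hEBfix hEBtr hEran hEbimod hEtr

lemma wordSpan_two_le_ker : wordSpan Msub EB 2 ≤ LinearMap.ker E := by
  rw [wordSpan, Submodule.span_le]
  rintro _ ⟨_, _, _, hℓ, hw⟩
  exact hw.condExp_eq_zero τ hfree hτtr hτfaith hBM hEBbimod hEBran hEBfix hEBtr hEran hEbimod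
    hEtr hℓ

lemma eventually_condExp_mul_pow_mul_eq_zero (hEBstar : ∀ x : M, EB (star x) = star (EB x))
    {i j : Fin 2} (hij : i ≠ j) {u₁ u₂ : M} (hu₁ : u₁ ∈ Msub i) (hu₁0 : EB u₁ = 0)
    (hu₂ : u₂ ∈ Msub j) (hu₂0 : EB u₂ = 0) {x y : M}
    (hx : x ∈ Submodule.span ℂ ((B : Set M) ∪ reducedWords Msub EB))
    (hy : y ∈ Submodule.span ℂ ((B : Set M) ∪ reducedWords Msub EB)) :
    ∀ᶠ n in atTop, E (x * (u₁ * u₂) ^ n * y) = 0 := by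
  refine Submodule.span_induction₂
    (p := fun x y _ _ => ∀ᶠ n in atTop, E (x * (u₁ * u₂) ^ n * y) = 0)
    (fun g h hg hh => ?_) ?_ ?_ ?_ ?_ ?_ ?_ hx hy
  · filter_upwards [eventually_mul_pow_mul_mem_wordSpan hBM hEBbimod hEBran hEBfix hEBstar hij
      hu₁ hu₁0 hu₂ hu₂0 hg hh] with n hn
    exact wordSpan_two_le_ker τ hfree hτtr hτfaith hBM hEBbimod hEBran hEBfix hEBtr hEran
      hEbimod hEtr hn
  · intros; simp
  · intros; simp
  · intro _ _ _ _ _ _ h₁ h₂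
    filter_upwards [h₁, h₂] with n h₁ h₂
    rw [add_mul, add_mul, map_add, h₁, h₂, add_zero]
  · intro _ _ _ _ _ _ h₁ h₂
    filter_upwards [h₁, h₂] with n h₁ h₂
    rw [mul_add, map_add, h₁, h₂, add_zero]
  · intro _ _ _ _ _ h
    filter_upwards [h] with n h
    rw [smul_mul_assoc, smul_mul_assoc, map_smul, h, smul_zero]
  · intro _ _ _ _ _ h
    filter_upwards [h] with n h
    rw [mul_smul_comm, map_smul, h, smul_zero]

end Freeness

end Expectations

end AmalgamatedFreeProduct

open AmalgamatedFreeProduct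

theorem stmt17_general {M : Type*} [Ring M] [Algebra ℂ M] [StarRing M] [StarModule ℂ M]
    (τ : M →ₗ[ℂ] ℂ)
    (hτ1 : τ 1 = 1) (hτtr : ∀ x y : M, τ (x * y) = τ (y * x))
    (hτpos : ∀ x : M, 0 ≤ (τ (star x * x)).re ∧ (τ (star x * x)).im = 0)
    (hτfaith : ∀ x : M, τ (star x * x) = 0 → x = 0)
    (B : StarSubalgebra ℂ M) (Msub : Fin 2 → StarSubalgebra ℂ M)
    (hBM : ∀ i, B ≤ Msub i)
    -- the conditional expectations onto `B` and onto `M₁ = Msub 0`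
    (EB EM₁ : M →ₗ[ℂ] M)
    (hEBran : ∀ x : M, EB x ∈ B) (hEBfix : ∀ b ∈ B, EB b = b)
    (hEBbimod : ∀ b ∈ B, ∀ x : M, ∀ b' ∈ B, EB (b * x * b') = b * EB x * b')
    (hEBtr : ∀ x : M, τ (EB x) = τ x)
    (hEM₁ran : ∀ x : M, EM₁ x ∈ Msub 0)
    (hEM₁bimod : ∀ a ∈ Msub 0, ∀ x : M, ∀ a' ∈ Msub 0, EM₁ (a * x * a') = a * EM₁ x * a')
    (hEM₁tr : ∀ x : M, τ (EM₁ x) = τ x)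
    -- freeness with amalgamation over `B`
    (hfree : ∀ (k : ℕ) (x : Fin (k + 1) → M) (idx : Fin (k + 1) → Fin 2),
      (∀ j, x j ∈ Msub (idx j)) → (∀ j, EB (x j) = 0) →
      (∀ j : Fin k, idx j.castSucc ≠ idx j.succ) →
      EB (List.ofFn x).prod = 0)
    -- `B` and the reduced words span `M` densely in 2-norm
    (hdense : ∀ z : M, ∀ ε : ℝ, 0 < ε →
      ∃ y ∈ Submodule.span ℂ ((B : Set M) ∪
          {w : M | ∃ (k : ℕ) (x : Fin (k + 1) → M) (idx : Fin (k + 1) → Fin 2),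
            (∀ j, x j ∈ Msub (idx j)) ∧ (∀ j, EB (x j) = 0) ∧
            (∀ j : Fin k, idx j.castSucc ≠ idx j.succ) ∧ w = (List.ofFn x).prod}),
        Real.sqrt (τ (star (z - y) * (z - y))).re < ε)
    -- `M₁` is diffuse: it contains a Haar unitary
    (hdiffuse : ∃ v ∈ Msub 0, star v * v = 1 ∧ v * star v = 1 ∧
      ∀ n : ℕ, n ≠ 0 → τ (v ^ n) = 0 ∧ τ (star v ^ n) = 0)
    -- unitaries `u₁ ∈ M₁`, `u₂ ∈ M₂` with `E_B(u₁) = E_B(u₂) = 0`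
    (u₁ u₂ : M) (hu₁ : u₁ ∈ Msub 0) (hu₂ : u₂ ∈ Msub 1)
    (hu₁U : star u₁ * u₁ = 1 ∧ u₁ * star u₁ = 1)
    (hu₂U : star u₂ * u₂ = 1 ∧ u₂ * star u₂ = 1)
    (hEBu : EB u₁ = 0 ∧ EB u₂ = 0) :
    -- (1) `E_{M₁}(x (u₁u₂)ⁿ y) = 0` eventually, on the dense span
    (∀ x ∈ Submodule.span ℂ ((B : Set M) ∪
        {w : M | ∃ (k : ℕ) (x' : Fin (k + 1) → M) (idx : Fin (k + 1) → Fin 2),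
          (∀ j, x' j ∈ Msub (idx j)) ∧ (∀ j, EB (x' j) = 0) ∧
          (∀ j : Fin k, idx j.castSucc ≠ idx j.succ) ∧ w = (List.ofFn x').prod}),
      ∀ y ∈ Submodule.span ℂ ((B : Set M) ∪
        {w : M | ∃ (k : ℕ) (x' : Fin (k + 1) → M) (idx : Fin (k + 1) → Fin 2),
          (∀ j, x' j ∈ Msub (idx j)) ∧ (∀ j, EB (x' j) = 0) ∧
          (∀ j : Fin k, idx j.castSucc ≠ idx j.succ) ∧ w = (List.ofFn x').prod}),
      ∃ N : ℕ, ∀ n : ℕ, N ≤ n → EM₁ (x * (u₁ * u₂) ^ n * y) = 0) ∧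
    -- (2) `u₁u₂` is not unitarily conjugate to any element of `M₁`
    (∀ v : M, star v * v = 1 → v * star v = 1 → v * (u₁ * u₂) * star v ∉ Msub 0) ∧
    -- (3) `M` contains two Haar unitaries that are not unitarily conjugate
    (∃ w₁ w₂ : M,
      (star w₁ * w₁ = 1 ∧ w₁ * star w₁ = 1 ∧
        ∀ n : ℕ, n ≠ 0 → τ (w₁ ^ n) = 0 ∧ τ (star w₁ ^ n) = 0) ∧
      (star w₂ * w₂ = 1 ∧ w₂ * star w₂ = 1 ∧
        ∀ n : ℕ, n ≠ 0 → τ (w₂ ^ n) = 0 ∧ τ (star w₂ ^ n) = 0) ∧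
      ¬ ∃ v : M, star v * v = 1 ∧ v * star v = 1 ∧ v * w₁ * star v = w₂) := by
  obtain ⟨hEBu₁, hEBu₂⟩ := hEBu
  have hEBstar := EB_star τ hτpos hτfaith hEBran hEBbimod hEBtr
  have hvanish : ∀ x ∈ Submodule.span ℂ ((B : Set M) ∪ reducedWords Msub EB),
      ∀ y ∈ Submodule.span ℂ ((B : Set M) ∪ reducedWords Msub EB),
      ∀ᶠ n in atTop, EM₁ (x * (u₁ * u₂) ^ n * y) = 0 := fun x hx y hy =>
    eventually_condExp_mul_pow_mul_eq_zero τ hfree hτtr hτfaith hBM hEBbimod hEBran hEBfix hEBtr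
      hEM₁ran hEM₁bimod hEM₁tr hEBstar (by decide) hu₁ hEBu₁ hu₂ hEBu₂ hx hy
  have hnotconj : ∀ v : M, star v * v = 1 → v * star v = 1 → v * (u₁ * u₂) * star v ∉ Msub 0 :=
    fun v hv₁ hv₂ => conj_not_mem_of_eventually_eq_zero hτ1 hτtr hτpos hEM₁bimod hEM₁tr hdense
      (mul_mem hu₁U hu₂U) (fun y hy => hvanish y hy _ (star_mem_span_union_reducedWords hEBstar hy))
      ⟨hv₁, hv₂⟩
  obtain ⟨v₀, hv₀, hv₀Haar⟩ := hdiffuse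
  refine ⟨fun x hx y hy => eventually_atTop.mp (hvanish x hx y hy), hnotconj, u₁ * u₂, v₀,
    isHaarUnitary_mul τ hfree hτpos hEBtr (by decide) hu₁ hEBu₁ hu₂ hEBu₂ hu₁U hu₂U, hv₀Haar, ?_⟩
  rintro ⟨v, hv₁, hv₂, hconj⟩
  exact hnotconj v hv₁ hv₂ (hconj ▸ hv₀)

theorem stmt17 {M : Type*} [Ring M] [Algebra ℂ M] [StarRing M] [StarModule ℂ M]
    (τ : M →ₗ[ℂ] ℂ)
    (hτ1 : τ 1 = 1) (hτtr : ∀ x y : M, τ (x * y) = τ (y * x))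
    (hτpos : ∀ x : M, 0 ≤ (τ (star x * x)).re ∧ (τ (star x * x)).im = 0)
    (hτfaith : ∀ x : M, τ (star x * x) = 0 → x = 0)
    (B : StarSubalgebra ℂ M) (Msub : Fin 2 → StarSubalgebra ℂ M)
    (hBM : ∀ i, B ≤ Msub i)
    -- the conditional expectations onto `B` and onto `M₁ = Msub 0`
    (EB EM₁ : M →ₗ[ℂ] M)
    (hEBran : ∀ x : M, EB x ∈ B) (hEBfix : ∀ b ∈ B, EB b = b)
    (hEBbimod : ∀ b ∈ B, ∀ x : M, ∀ b' ∈ B, EB (b * x * b') = b * EB x * b')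
    (hEBtr : ∀ x : M, τ (EB x) = τ x)
    (hEM₁ran : ∀ x : M, EM₁ x ∈ Msub 0) (hEM₁fix : ∀ a ∈ Msub 0, EM₁ a = a)
    (hEM₁bimod : ∀ a ∈ Msub 0, ∀ x : M, ∀ a' ∈ Msub 0, EM₁ (a * x * a') = a * EM₁ x * a')
    (hEM₁tr : ∀ x : M, τ (EM₁ x) = τ x)
    -- freeness with amalgamation over `B`
    (hfree : ∀ (k : ℕ) (x : Fin (k + 1) → M) (idx : Fin (k + 1) → Fin 2),
      (∀ j, x j ∈ Msub (idx j)) → (∀ j, EB (x j) = 0) →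
      (∀ j : Fin k, idx j.castSucc ≠ idx j.succ) →
      EB (List.ofFn x).prod = 0)
    -- `B` and the reduced words span `M` densely in 2-norm
    (hdense : ∀ z : M, ∀ ε : ℝ, 0 < ε →
      ∃ y ∈ Submodule.span ℂ ((B : Set M) ∪
          {w : M | ∃ (k : ℕ) (x : Fin (k + 1) → M) (idx : Fin (k + 1) → Fin 2),
            (∀ j, x j ∈ Msub (idx j)) ∧ (∀ j, EB (x j) = 0) ∧
            (∀ j : Fin k, idx j.castSucc ≠ idx j.succ) ∧ w = (List.ofFn x).prod}),
        Real.sqrt (τ (star (z - y) * (z - y))).re < ε)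
    -- `M₁` is diffuse: it contains a Haar unitary
    (hdiffuse : ∃ v ∈ Msub 0, star v * v = 1 ∧ v * star v = 1 ∧
      ∀ n : ℕ, n ≠ 0 → τ (v ^ n) = 0 ∧ τ (star v ^ n) = 0)
    -- unitaries `u₁ ∈ M₁`, `u₂ ∈ M₂` with `E_B(u₁) = E_B(u₂) = 0`
    (u₁ u₂ : M) (hu₁ : u₁ ∈ Msub 0) (hu₂ : u₂ ∈ Msub 1)
    (hu₁U : star u₁ * u₁ = 1 ∧ u₁ * star u₁ = 1)
    (hu₂U : star u₂ * u₂ = 1 ∧ u₂ * star u₂ = 1)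
    (hEBu : EB u₁ = 0 ∧ EB u₂ = 0) :
    -- (1) `E_{M₁}(x (u₁u₂)ⁿ y) = 0` eventually, on the dense span
    (∀ x ∈ Submodule.span ℂ ((B : Set M) ∪
        {w : M | ∃ (k : ℕ) (x' : Fin (k + 1) → M) (idx : Fin (k + 1) → Fin 2),
          (∀ j, x' j ∈ Msub (idx j)) ∧ (∀ j, EB (x' j) = 0) ∧
          (∀ j : Fin k, idx j.castSucc ≠ idx j.succ) ∧ w = (List.ofFn x').prod}),
      ∀ y ∈ Submodule.span ℂ ((B : Set M) ∪
        {w : M | ∃ (k : ℕ) (x' : Fin (k + 1) → M) (idx : Fin (k + 1) → Fin 2),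
          (∀ j, x' j ∈ Msub (idx j)) ∧ (∀ j, EB (x' j) = 0) ∧
          (∀ j : Fin k, idx j.castSucc ≠ idx j.succ) ∧ w = (List.ofFn x').prod}),
      ∃ N : ℕ, ∀ n : ℕ, N ≤ n → EM₁ (x * (u₁ * u₂) ^ n * y) = 0) ∧
    -- (2) `u₁u₂` is not unitarily conjugate to any element of `M₁`
    (∀ v : M, star v * v = 1 → v * star v = 1 → v * (u₁ * u₂) * star v ∉ Msub 0) ∧
    -- (3) `M` contains two Haar unitaries that are not unitarily conjugate
    (∃ w₁ w₂ : M,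
      (star w₁ * w₁ = 1 ∧ w₁ * star w₁ = 1 ∧
        ∀ n : ℕ, n ≠ 0 → τ (w₁ ^ n) = 0 ∧ τ (star w₁ ^ n) = 0) ∧
      (star w₂ * w₂ = 1 ∧ w₂ * star w₂ = 1 ∧
        ∀ n : ℕ, n ≠ 0 → τ (w₂ ^ n) = 0 ∧ τ (star w₂ ^ n) = 0) ∧
      ¬ ∃ v : M, star v * v = 1 ∧ v * star v = 1 ∧ v * w₁ * star v = w₂) :=
  stmt17_general τ hτ1 hτtr hτpos hτfaith B Msub hBM EB EM₁ hEBran hEBfix hEBbimod hEBtr hEM₁ran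
    hEM₁bimod hEM₁tr hfree hdense hdiffuse u₁ u₂ hu₁ hu₂ hu₁U hu₂U hEBu
end
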